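/- Let (T,α) be a stable (pure Nash equilibrium) network whose induced graph T is a tree on n vertices, rooted at a centroid c of T, and let u, v be two vertices of T with u, v ≠ c such that agent u buys the edge (u,v) in T. Then d_T(c,u) < d_T(c,v), i.e., u is the parent of v in T. Furthermore, if T̄ denotes the subtree of T rooted at v, then v is a centroid of T̄. -/

import Mathlib

open scoped BigOperators

namespace NCG

variable {V : Type*} [Fintype V] [DecidableEq V]

/-- The network induced by a strategy vector `st`: `{u,v}` is an edge iff (at least)
one of the endpoints buys it, i.e. `v ∈ st u` or `u ∈ st v`. -/
def graph (st : V → Finset V) : SimpleGraph V where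
  Adj u v := u ≠ v ∧ (v ∈ st u ∨ u ∈ st v)
  symm := ⟨fun u v h => ⟨h.1.symm, h.2.symm⟩⟩
  loopless := ⟨fun u h => h.1 rfl⟩

open scoped Classical in
/-- The distance cost of agent `u`: the sum of the graph distances to all nodes if the
network is connected, and `⊤` otherwise. -/
noncomputable def distcost (st : V → Finset V) (u : V) : EReal :=
  if (graph st).Connected then (((∑ w : V, ((graph st).dist u w : ℝ)) : ℝ) : EReal) else ⊤

/-- The cost of agent `u`: `α` per bought edge plus the distance cost. -/
noncomputable def cost (α : ℝ) (st : V → Finset V) (u : V) : EReal :=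
  ((α * (st u).card : ℝ) : EReal) + distcost st u

/-- A network is stable (a pure Nash equilibrium) if no agent `u` can strictly
decrease her cost by unilaterally changing her own strategy set `st u`. -/
def Stable (α : ℝ) (st : V → Finset V) : Prop :=
  ∀ u : V, ∀ t : Finset V, u ∉ t → cost α st u ≤ cost α (Function.update st u t) u

/-- The social cost of a network: the sum of the costs of all agents. -/
noncomputable def socialCost (α : ℝ) (st : V → Finset V) : EReal :=
  ∑ u : V, cost α st u

/-- The optimal (minimum) social cost over all strategy vectors on agent set `W`. -/
noncomputable def optCost (α : ℝ) (W : Type*) [Fintype W] [DecidableEq W] : EReal :=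
  sInf {c : EReal | ∃ st : W → Finset W, (∀ u, u ∉ st u) ∧ c = socialCost α st}

/-- `T` is a shortest path tree of `G` rooted at `r`: a spanning tree of `G`
preserving all distances from `r`. -/
def IsSPT (G : SimpleGraph V) (r : V) (T : SimpleGraph V) : Prop :=
  T ≤ G ∧ T.IsTree ∧ ∀ x, T.dist r x = G.dist r x

/-- The subgraph of `G` induced on `S` is biconnected: it has at least 3 vertices,
it is connected, and it has no cut vertex. -/
def IsBiconnectedOn (G : SimpleGraph V) (S : Set V) : Prop :=
  3 ≤ S.ncard ∧ (G.induce S).Connected ∧ ∀ x ∈ S, (G.induce (S \ {x})).Connected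

/-- `S` induces a biconnected component of `G`: a maximal biconnected induced subgraph. -/
def IsBiconnectedComponent (G : SimpleGraph V) (S : Set V) : Prop :=
  IsBiconnectedOn G S ∧ ∀ S' : Set V, S ⊆ S' → IsBiconnectedOn G S' → S' = S

/-- `⟨v,u⟩` is a critical pair (with witnesses `v₁, v₂, u'` and biconnected component `H`)
of the network induced by the strategy vector `st`:
(1) `v ∈ H` buys the two distinct non-bridge edges `(v,v₁)` and `(v,v₂)` with `v₁,v₂ ∈ H`;
(2) `u ∈ H`, `u ≠ v`, buys an edge `(u,u')` with `u' ∈ H`, `u' ≠ v`;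
(3) `d(v,u) ≥ 2`;
(4) some shortest path from `v` to `u` uses the edge `(v,v₁)`;
(5) some shortest path from `v` to `u'` does not use the edge `(u,u')`. -/
def IsCriticalPair (st : V → Finset V) (H : Set V) (v u v₁ v₂ u' : V) : Prop :=
  IsBiconnectedComponent (graph st) H ∧
  v ∈ H ∧ v₁ ∈ H ∧ v₂ ∈ H ∧ v₁ ≠ v₂ ∧
  v₁ ∈ st v ∧ v₂ ∈ st v ∧
  ¬ (graph st).IsBridge (Sym2.mk v v₁) ∧ ¬ (graph st).IsBridge (Sym2.mk v v₂) ∧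
  u ∈ H ∧ u ≠ v ∧ u' ∈ H ∧ u' ≠ v ∧ u' ∈ st u ∧
  2 ≤ (graph st).dist v u ∧
  (∃ p : (graph st).Walk v u, p.IsPath ∧ p.length = (graph st).dist v u ∧
    Sym2.mk v v₁ ∈ p.edges) ∧
  (∃ p : (graph st).Walk v u', p.IsPath ∧ p.length = (graph st).dist v u' ∧
    Sym2.mk u u' ∉ p.edges)

/-- A critical pair is strong if moreover some shortest path from `u` to `v₂`
does not use the edge `(v,v₂)`. -/
def IsStrongCriticalPair (st : V → Finset V) (H : Set V) (v u v₁ v₂ u' : V) : Prop :=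
  IsCriticalPair st H v u v₁ v₂ u' ∧
  ∃ p : (graph st).Walk u v₂, p.IsPath ∧ p.length = (graph st).dist u v₂ ∧
    Sym2.mk v v₂ ∉ p.edges

/-- A cycle `c` in `G` is a min cycle if for every two vertices on the cycle, their
distance along the cycle equals their distance in `G`. -/
def IsMinCycle (G : SimpleGraph V) {a : V} (c : G.Walk a a) : Prop :=
  c.IsCycle ∧ ∀ (x : V) (hx : x ∈ c.toSubgraph.verts) (y : V) (hy : y ∈ c.toSubgraph.verts),
    c.toSubgraph.coe.dist ⟨x, hx⟩ ⟨y, hy⟩ = G.dist x y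

/-- A cycle `c` of the network induced by `st` is directed if, traversed in one of the
two possible directions, every edge of the cycle is bought by its tail vertex. -/
def IsDirectedCycle (st : V → Finset V) {a : V} (c : (graph st).Walk a a) : Prop :=
  c.IsCycle ∧
    ((∀ i < c.length, c.getVert (i + 1) ∈ st (c.getVert i)) ∨
     (∀ i < c.length, c.getVert i ∈ st (c.getVert (i + 1))))

/-- `c` is a centroid of (the subgraph of `G` induced on) `S`: every connected component
obtained from `S` by removing `c` contains at most `|S|/2` vertices. -/
def IsCentroidOn (G : SimpleGraph V) (S : Set V) (c : V) : Prop :=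
  c ∈ S ∧ ∀ x ∈ S, x ≠ c →
    2 * {y | y ∈ S ∧ ∃ p : G.Walk x y, c ∉ p.support ∧ ∀ z ∈ p.support, z ∈ S}.ncard
      ≤ S.ncard

end NCG

/-!
Let agent `u` buy the edge `uv` of a stable tree and let `B` be the subtree hanging at `v`. For
any other neighbour `t` of `v`, swapping `uv` for `ut` does not lengthen `u`'s other distances
and turns her distance `d(v,w) + 1` to `w ∈ B` into at most `d(t,w) + 1`, which is `d(v,w) ∓ 1`
according as `w` lies in the subtree at `t` or not. So stability forces that subtree to hold at most half of `B`,
i.e. `v` is a centroid of `B`. If `c` lay in `B`, then for `t` the neighbour of `v` towards `c`,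
the component of `v` in `T - c` would contain the complement of `B` (which contains `u`) and at
least half of `B`, hence more than half of all vertices.
-/

open Finset

theorem Finset.card_filter_le_card_filter_not_of_sum_le {ι : Type*} {s : Finset ι}
    {f g : ι → ℕ} {p : ι → Prop} [DecidablePred p] (hfg : ∑ i ∈ s, f i ≤ ∑ i ∈ s, g i)
    (hp : ∀ i ∈ s, p i → f i = g i + 1) (hnp : ∀ i ∈ s, ¬ p i → g i = f i + 1) :
    #{i ∈ s | p i} ≤ #{i ∈ s | ¬ p i} := by
  have hf : ∑ i ∈ s with p i, f i = ∑ i ∈ s with p i, g i + #{i ∈ s | p i} := by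
    rw [card_eq_sum_ones, ← sum_add_distrib]
    exact sum_congr rfl fun i hi => hp i (mem_filter.mp hi).1 (mem_filter.mp hi).2
  have hg : ∑ i ∈ s with ¬ p i, g i = ∑ i ∈ s with ¬ p i, f i + #{i ∈ s | ¬ p i} := by
    rw [card_eq_sum_ones, ← sum_add_distrib]
    exact sum_congr rfl fun i hi => hnp i (mem_filter.mp hi).1 (mem_filter.mp hi).2
  rw [← sum_filter_add_sum_filter_not s p f, ← sum_filter_add_sum_filter_not s p g] at hfg
  omega

namespace SimpleGraph

variable {V : Type*} {G : SimpleGraph V} {a b t w x y z : V}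

theorem Walk.dist_add_dist_of_mem_support {p : G.Walk a b} (hp : p.length = G.dist a b)
    (hx : x ∈ p.support) : G.dist a x + G.dist x b = G.dist a b := by
  classical
  rw [← length_eq_dist_of_subwalk hp (p.isSubwalk_takeUntil hx),
    ← length_eq_dist_of_subwalk hp (p.isSubwalk_dropUntil hx), ← Walk.length_append,
    p.take_spec hx, hp]

section Branch

variable [Fintype V]

/-- For an edge `ab` of a tree, the subtree hanging at `b`: the vertices one step closer to `b`
than to `a`. -/
noncomputable def branch (G : SimpleGraph V) (a b : V) : Finset V :=
  {w | G.dist a w = G.dist b w + 1}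

theorem mem_branch : w ∈ G.branch a b ↔ G.dist a w = G.dist b w + 1 := by
  simp [branch]

theorem Adj.mem_branch (hab : G.Adj a b) : b ∈ G.branch a b := by
  simp [SimpleGraph.mem_branch, dist_eq_one_iff_adj.mpr hab]

theorem left_notMem_branch : a ∉ G.branch a b := by
  simp [mem_branch]

theorem Connected.exists_adj_mem_branch (hG : G.Connected) (hab : a ≠ b) :
    ∃ t, G.Adj a t ∧ b ∈ G.branch a t := by
  obtain ⟨p, -, hp⟩ := hG.exists_path_of_dist a b
  have hnil : ¬ p.Nil := p.not_nil_of_ne hab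
  have hat := p.adj_snd hnil
  have htail : G.dist p.snd b ≤ p.tail.length := dist_le p.tail
  have hlen := p.length_tail_add_one hnil
  have htri : G.dist a b ≤ G.dist a p.snd + G.dist p.snd b := hG.dist_triangle
  rw [dist_eq_one_iff_adj.mpr hat] at htri
  exact ⟨p.snd, hat, mem_branch.mpr (by omega)⟩

theorem IsTree.mem_branch_or_mem_branch (hT : G.IsTree) (hab : G.Adj a b) (w : V) :
    w ∈ G.branch a b ∨ w ∈ G.branch b a := by
  simp only [mem_branch, dist_comm (u := a), dist_comm (u := b)]
  exact hT.dist_eq_dist_add_one_of_adj w hab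

theorem IsTree.mem_branch_of_adj (hT : G.IsTree) (hab : G.Adj a b) (hbt : G.Adj b t)
    (hta : t ≠ a) : t ∈ G.branch a b := by
  refine (hT.mem_branch_or_mem_branch hab t).resolve_right fun ht => hta ?_
  rw [mem_branch, dist_eq_one_iff_adj.mpr hbt] at ht
  exact (hT.connected.dist_eq_zero_iff.mp (by omega)).symm

theorem IsTree.card_branch_add_card_branch [DecidableEq V] (hT : G.IsTree) (hab : G.Adj a b) :
    #(G.branch a b) + #(G.branch b a) = Fintype.card V := by
  rw [← card_union_of_disjoint, ← card_univ]
  · exact congrArg card <| eq_univ_of_forall fun w =>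
      mem_union.mpr (hT.mem_branch_or_mem_branch hab w)
  · exact Finset.disjoint_left.mpr fun w h h' => by rw [mem_branch] at h h'; omega

theorem IsTree.mem_edges_of_mem_branch (hT : G.IsTree) (hab : G.Adj a b) (p : G.Walk w z)
    (hw : w ∈ G.branch b a) (hz : z ∈ G.branch a b) : s(a, b) ∈ p.edges := by
  by_contra hp
  have hreach : ∀ {a b w : V}, w ∈ G.branch b a → (G.deleteEdges {s(a, b)}).Reachable a w := by
    intro a b w hw
    obtain ⟨q, -, hq⟩ := hT.connected.exists_path_of_dist a w
    refine reachable_deleteEdges_iff_exists_walk.mpr ⟨q, fun h => ?_⟩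
    have := q.dist_add_dist_of_mem_support hq (q.snd_mem_support_of_mem_edges h)
    rw [mem_branch] at hw
    omega
  have hzb := hreach hz
  rw [Sym2.eq_swap] at hzb
  exact isBridge_iff.mp (isAcyclic_iff_forall_adj_isBridge.mp hT.isAcyclic hab)
    ((hreach hw).trans ((reachable_deleteEdges_iff_exists_walk.mpr ⟨p, hp⟩).trans hzb.symm))

theorem IsTree.dist_eq_of_mem_branch (hT : G.IsTree) (hab : G.Adj a b)
    (hw : w ∈ G.branch b a) (hz : z ∈ G.branch a b) :
    G.dist w z = G.dist w a + 1 + G.dist b z := by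
  obtain ⟨p, -, hp⟩ := hT.connected.exists_path_of_dist w z
  have := p.dist_add_dist_of_mem_support hp
    (p.fst_mem_support_of_mem_edges (hT.mem_edges_of_mem_branch hab p hw hz))
  rw [mem_branch] at hz
  omega

theorem IsTree.mem_branch_of_mem_support (hT : G.IsTree) (hab : G.Adj a b) {p : G.Walk w z}
    (hp : p.length = G.dist w z) (hw : w ∈ G.branch a b) (hz : z ∈ G.branch a b)
    (hx : x ∈ p.support) : x ∈ G.branch a b := by
  refine (hT.mem_branch_or_mem_branch hab x).resolve_right fun hx' => ?_
  have hxw := hT.dist_eq_of_mem_branch hab hx' hw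
  have hxz := hT.dist_eq_of_mem_branch hab hx' hz
  have hsplit := p.dist_add_dist_of_mem_support hp hx
  have htri : G.dist w z ≤ G.dist w b + G.dist b z := hT.connected.dist_triangle
  rw [dist_comm (u := w) (v := x)] at hsplit
  rw [dist_comm (u := w) (v := b)] at htri
  omega

theorem IsTree.exists_walk_deleteEdges_of_mem_branch (hT : G.IsTree) (hab : G.Adj a b)
    (hx : x ∈ G.branch a b) (hy : y ∈ G.branch a b) :
    ∃ p : (G.deleteEdges {s(a, b)}).Walk x y, p.length = G.dist x y := by
  obtain ⟨q, -, hq⟩ := hT.connected.exists_path_of_dist x y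
  have ha : a ∉ q.support := fun h =>
    left_notMem_branch (hT.mem_branch_of_mem_support hab hq hx hy h)
  exact ⟨q.toDeleteEdge _ fun h => ha (q.fst_mem_support_of_mem_edges h), by simpa using hq⟩

theorem IsTree.setOf_dist_eq_dist_add_dist (hT : G.IsTree) (hab : G.Adj a b) {c : V}
    (hc : G.dist c a < G.dist c b) :
    {x | G.dist c x = G.dist c b + G.dist b x} = (G.branch a b : Set V) := by
  have hcA : c ∈ G.branch b a := (hT.mem_branch_or_mem_branch hab c).resolve_left fun h => by
    rw [mem_branch, dist_comm (u := a), dist_comm (u := b)] at h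
    omega
  have hcb := hT.dist_eq_of_mem_branch hab hcA hab.mem_branch
  rw [dist_self] at hcb
  ext x
  simp only [Set.mem_ofPred_eq, mem_coe]
  refine ⟨fun hx => (hT.mem_branch_or_mem_branch hab x).resolve_right fun hx' => ?_,
    fun hx => by rw [hT.dist_eq_of_mem_branch hab hcA hx]; omega⟩
  have htri : G.dist c x ≤ G.dist c a + G.dist a x := hT.connected.dist_triangle
  rw [mem_branch] at hx'
  omega

end Branch

end SimpleGraph

namespace NCG

open SimpleGraph

variable {V : Type*} {st : V → Finset V} {u v : V}

@[simp]
theorem graph_adj : (graph st).Adj u v ↔ u ≠ v ∧ (v ∈ st u ∨ u ∈ st v) := Iff.rfl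

theorem graph_adj_of_mem (hself : ∀ u, u ∉ st u) (h : v ∈ st u) : (graph st).Adj u v :=
  ⟨by rintro rfl; exact hself u h, Or.inl h⟩

variable [DecidableEq V] {s : Finset V}

theorem deleteEdges_le_graph_update (hs : (st u).erase v ⊆ s) :
    (graph st).deleteEdges {s(u, v)} ≤ graph (Function.update st u s) := by
  intro x y hxy
  simp only [deleteEdges_adj, graph_adj, Set.mem_singleton_iff] at hxy ⊢
  obtain ⟨⟨hne, hxy⟩, he⟩ := hxy
  refine ⟨hne, hxy.imp (fun h => ?_) (fun h => ?_)⟩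
  · by_cases hx : x = u
    · subst hx
      simpa using hs (mem_erase.mpr ⟨by rintro rfl; exact he rfl, h⟩)
    · rwa [Function.update_of_ne hx]
  · by_cases hy : y = u
    · subst hy
      simpa using hs (mem_erase.mpr ⟨by rintro rfl; exact he Sym2.eq_swap, h⟩)
    · rwa [Function.update_of_ne hy]

variable [Fintype V] {α : ℝ} {t c : V}

theorem Stable.sum_dist_le (hst : Stable α st) (hG : (graph st).Connected) (hus : u ∉ s)
    (hcard : #s = #(st u)) (hG' : (graph (Function.update st u s)).Connected) :
    ∑ w, (graph st).dist u w ≤ ∑ w, (graph (Function.update st u s)).dist u w := by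
  have h := hst u s hus
  simp only [cost, distcost, if_pos hG, if_pos hG', Function.update_self, hcard] at h
  rw [← EReal.coe_add, ← EReal.coe_add, EReal.coe_le_coe_iff] at h
  exact_mod_cast le_of_add_le_add_left h

/-- The deviation: `u` swaps her edge `uv` for `ut`. -/
theorem Stable.sum_dist_branch_le (hst : Stable α st) (hself : ∀ u, u ∉ st u)
    (hT : (graph st).IsTree) (hbuy : v ∈ st u) (hvt : (graph st).Adj v t) (htu : t ≠ u) :
    ∑ w ∈ (graph st).branch u v, (graph st).dist v w ≤
      ∑ w ∈ (graph st).branch u v, (graph st).dist t w := by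
  set G := graph st
  set B := G.branch u v
  set s := insert t ((st u).erase v)
  set G' := graph (Function.update st u s)
  have huv : G.Adj u v := graph_adj_of_mem hself hbuy
  have htB : t ∈ B := hT.mem_branch_of_adj huv hvt htu
  have hle : G.deleteEdges {s(u, v)} ≤ G' := deleteEdges_le_graph_update (subset_insert _ _)
  have hut : G'.Adj u t := by simp [G', s, htu.symm]
  have hnear : ∀ w ∈ B, ∃ p : G'.Walk u w, p.length = G.dist t w + 1 := fun w hw => by
    obtain ⟨p, hp⟩ := hT.exists_walk_deleteEdges_of_mem_branch huv htB hw
    exact ⟨.cons hut (p.mapLe hle), by simp [hp]⟩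
  have hfar : ∀ w ∉ B, ∃ p : G'.Walk u w, p.length = G.dist u w := fun w hw => by
    obtain ⟨p, hp⟩ := hT.exists_walk_deleteEdges_of_mem_branch huv.symm huv.symm.mem_branch
      ((hT.mem_branch_or_mem_branch huv w).resolve_left hw)
    exact ⟨p.mapLe (Sym2.eq_swap (a := u) ▸ hle), by simp [hp]⟩
  have hconn : G'.Connected := (connected_iff_exists_forall_reachable _).mpr ⟨u, fun w => by
    by_cases hw : w ∈ B
    · exact (hnear w hw).choose.reachable
    · exact (hfar w hw).choose.reachable⟩
  have htnot : t ∉ st u := fun h => by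
    have h1 : G.dist u t = 1 := dist_eq_one_iff_adj.mpr (graph_adj_of_mem hself h)
    have h2 : G.dist v t = 1 := dist_eq_one_iff_adj.mpr hvt
    rw [mem_branch] at htB
    omega
  have hsum : ∑ w, G.dist u w ≤ ∑ w, G'.dist u w := hst.sum_dist_le hT.connected
    (by simp [s, htu.symm, hself])
    (by rw [card_insert_of_notMem (by simp [htnot]), card_erase_add_one hbuy]) hconn
  rw [← sum_add_sum_compl B, ← sum_add_sum_compl B] at hsum
  have hB : ∑ w ∈ B, G'.dist u w ≤ ∑ w ∈ B, (G.dist t w + 1) := sum_le_sum fun w hw => by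
    obtain ⟨p, hp⟩ := hnear w hw
    exact hp ▸ dist_le p
  have hA : ∑ w ∈ Bᶜ, G'.dist u w ≤ ∑ w ∈ Bᶜ, G.dist u w := sum_le_sum fun w hw => by
    obtain ⟨p, hp⟩ := hfar w (mem_compl.mp hw)
    exact hp ▸ dist_le p
  have hU : ∑ w ∈ B, G.dist u w = ∑ w ∈ B, (G.dist v w + 1) :=
    sum_congr rfl fun w hw => mem_branch.mp hw
  rw [sum_add_distrib] at hB hU
  omega

theorem Stable.two_mul_card_branch_le (hst : Stable α st) (hself : ∀ u, u ∉ st u)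
    (hT : (graph st).IsTree) (hbuy : v ∈ st u) (hvt : (graph st).Adj v t) (htu : t ≠ u) :
    2 * #((graph st).branch v t) ≤ #((graph st).branch u v) := by
  set G := graph st
  have huv : G.Adj u v := graph_adj_of_mem hself hbuy
  have hsub : G.branch v t ⊆ G.branch u v := fun w hw => by
    have hu : u ∈ G.branch t v := hT.mem_branch_of_adj hvt.symm huv.symm htu.symm
    have h := hT.dist_eq_of_mem_branch hvt hu hw
    rw [dist_eq_one_iff_adj.mpr huv] at h
    rw [mem_branch] at hw ⊢
    omega
  have hcount :
      #{w ∈ G.branch u v | w ∈ G.branch v t} ≤ #{w ∈ G.branch u v | w ∉ G.branch v t} :=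
    card_filter_le_card_filter_not_of_sum_le (hst.sum_dist_branch_le hself hT hbuy hvt htu)
      (fun w _ hw => mem_branch.mp hw)
      (fun w _ hw => mem_branch.mp ((hT.mem_branch_or_mem_branch hvt w).resolve_left hw))
  have hsplit := card_filter_add_card_filter_not (s := G.branch u v) (· ∈ G.branch v t)
  rw [filter_mem_eq_inter, inter_eq_right.mpr hsub] at hcount hsplit
  omega

theorem Stable.dist_lt_dist_of_mem (hst : Stable α st) (hself : ∀ u, u ∉ st u)
    (hT : (graph st).IsTree) (hc : IsCentroidOn (graph st) Set.univ c) (hv : v ≠ c)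
    (hbuy : v ∈ st u) : (graph st).dist c u < (graph st).dist c v := by
  set G := graph st
  have huv : G.Adj u v := graph_adj_of_mem hself hbuy
  by_contra hcuv
  have hcB : c ∈ G.branch u v := (hT.mem_branch_or_mem_branch huv c).resolve_right fun h => by
    rw [mem_branch, dist_comm (u := v), dist_comm (u := u)] at h
    omega
  obtain ⟨y, hvy, hcy⟩ := hT.connected.exists_adj_mem_branch hv
  have hyu : y ≠ u := by
    rintro rfl
    rw [mem_branch] at hcB hcy
    omega
  have hcomp : (G.branch y v : Set V) ⊆
      {z | z ∈ Set.univ ∧ ∃ p : G.Walk v z, c ∉ p.support ∧ ∀ x ∈ p.support, x ∈ Set.univ} := by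
    intro z hz
    obtain ⟨p, -, hp⟩ := hT.connected.exists_path_of_dist v z
    refine ⟨trivial, p, fun hcp => ?_, fun _ _ => trivial⟩
    have := hT.mem_branch_of_mem_support hvy.symm hp hvy.symm.mem_branch hz hcp
    rw [mem_branch] at this hcy
    omega
  have hhalf : 2 * #(G.branch y v) ≤ Fintype.card V := by
    have := hc.2 v trivial hv
    rw [Set.ncard_univ, Nat.card_eq_fintype_card] at this
    have hle := Set.ncard_le_ncard hcomp
    rw [Set.ncard_coe_finset] at hle
    omega
  have hu : #(G.branch u v) < Fintype.card V := card_lt_univ_of_notMem left_notMem_branch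
  have htwo : 2 * #(G.branch v y) ≤ #(G.branch u v) :=
    hst.two_mul_card_branch_le hself hT hbuy hvy hyu
  have hpart : #(G.branch v y) + #(G.branch y v) = Fintype.card V :=
    hT.card_branch_add_card_branch hvy
  omega

theorem Stable.isCentroidOn_branch (hst : Stable α st) (hself : ∀ u, u ∉ st u)
    (hT : (graph st).IsTree) (hbuy : v ∈ st u) :
    IsCentroidOn (graph st) ((graph st).branch u v) v := by
  set G := graph st
  have huv : G.Adj u v := graph_adj_of_mem hself hbuy
  refine ⟨huv.mem_branch, fun x hx hxv => ?_⟩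
  obtain ⟨t, hvt, hxt⟩ := hT.connected.exists_adj_mem_branch (Ne.symm hxv)
  have htu : t ≠ u := by
    rintro rfl
    rw [mem_coe, mem_branch] at hx
    rw [mem_branch] at hxt
    omega
  have hcomp : {y | y ∈ (G.branch u v : Set V) ∧ ∃ p : G.Walk x y, v ∉ p.support ∧
      ∀ z ∈ p.support, z ∈ (G.branch u v : Set V)} ⊆ G.branch v t := by
    rintro y ⟨-, p, hvp, -⟩
    by_contra hy
    have hy' := (hT.mem_branch_or_mem_branch hvt y).resolve_left hy
    exact hvp (p.snd_mem_support_of_mem_edges (hT.mem_edges_of_mem_branch hvt.symm p hxt hy'))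
  calc 2 * Set.ncard _ ≤ 2 * #(G.branch v t) := by
        gcongr
        simpa using Set.ncard_le_ncard hcomp
    _ ≤ #(G.branch u v) := hst.two_mul_card_branch_le hself hT hbuy hvt htu
    _ = Set.ncard (G.branch u v : Set V) := (Set.ncard_coe_finset _).symm

end NCG

theorem centroid_parent_child_general {V : Type*} [Fintype V] [DecidableEq V]
    (α : ℝ) (st : V → Finset V) (hself : ∀ u, u ∉ st u)
    (hstable : NCG.Stable α st)
    (htree : (NCG.graph st).IsTree)
    (c : V) (hc : NCG.IsCentroidOn (NCG.graph st) Set.univ c)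
    (u v : V) (hv : v ≠ c) (hbuy : v ∈ st u) :
    (NCG.graph st).dist c u < (NCG.graph st).dist c v ∧
    NCG.IsCentroidOn (NCG.graph st)
      {x : V | (NCG.graph st).dist c x = (NCG.graph st).dist c v + (NCG.graph st).dist v x}
      v := by
  have hlt := hstable.dist_lt_dist_of_mem hself htree hc hv hbuy
  rw [htree.setOf_dist_eq_dist_add_dist (NCG.graph_adj_of_mem hself hbuy) hlt]
  exact ⟨hlt, hstable.isCentroidOn_branch hself htree hbuy⟩

/-- Let `(T,α)` be a stable tree network rooted at a centroid `c`, and let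
`u, v ≠ c` be vertices such that agent `u` buys the edge `(u,v)`. Then
`d_T(c,u) < d_T(c,v)` (i.e. `u` is the parent of `v`), and `v` is a centroid of the subtree
of `T` rooted at `v`. -/
theorem centroid_parent_child {V : Type*} [Fintype V] [DecidableEq V]
    (α : ℝ) (st : V → Finset V) (hself : ∀ u, u ∉ st u)
    (hstable : NCG.Stable α st)
    (htree : (NCG.graph st).IsTree)
    (c : V) (hc : NCG.IsCentroidOn (NCG.graph st) Set.univ c)
    (u v : V) (hu : u ≠ c) (hv : v ≠ c) (hbuy : v ∈ st u) :
    (NCG.graph st).dist c u < (NCG.graph st).dist c v ∧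
    NCG.IsCentroidOn (NCG.graph st)
      {x : V | (NCG.graph st).dist c x = (NCG.graph st).dist c v + (NCG.graph st).dist v x}
      v :=
  centroid_parent_child_general α st hself hstable htree c hc u v hv hbuy
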